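/- Let X be a finite nonempty set, β > 0, T > 0, and let A, Q be hermitian operators on ℂ^X. Define the Keldysh covariance blocks for t,t' ∈ [0,T]: C_{−+}(t,t') = exp(−itA) (I + exp(−βQ))^{−1} exp(it'A); C_{+−}(t,t') = −exp(−itA) (I + exp(βQ))^{−1} exp(it'A); C_{++}(t,t') = 1_{t≥t'} C_{−+}(t,t') + 1_{t<t'} C_{+−}(t,t'); C_{−−}(t,t') = 1_{t≤t'} C_{−+}(t,t') + 1_{t>t'} C_{+−}(t,t'). Let |X| denote the cardinality of X. Define the decay constant α_C = max{ sup_{ρ∈{+,−}, t∈[0,T], x∈X} ∑_{σ∈{+,−}} ∫₀^T ∑_{y∈X} |(C_{ρσ}(t,t'))_{x,y}| dt', sup_{σ∈{+,−}, t'∈[0,T], y∈X} ∑_{ρ∈{+,−}} ∫₀^T ∑_{x∈X} |(C_{ρσ}(t,t'))_{x,y}| dt } and the modified decay constant α̃_C = max{ sup_{σ∈{+,−}, t'∈[0,T], y∈X} ∑_{x∈X} |(C_{+σ}(T,t'))_{x,y}|, sup_{ρ∈{+,−}, t∈[0,T], x∈X} ∑_{y∈X} |(C_{ρ−}(t,T))_{x,y}|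 }. Then α_C ≤ 2 |X| T and α̃_C ≤ |X|. -/

import Mathlib

/-!
For fixed times every block of the covariance is `±U (1 + e^{cQ})⁻¹ V` with `c = ∓β` and
`U = e^{-itA}`, `V = e^{it'A}` unitary, or (for `++` and `−−`) exactly one of these two.
In the C⋆-norm of matrices the unitaries drop out, and `(1 + e^{cQ})⁻¹` is the functional
calculus of `x ↦ (1 + e^{cx})⁻¹ ∈ (0, 1)` at the hermitian `Q`, so it has norm at most `1`.
An entry is bounded by the operator norm, so all entries have modulus at most `1`; a row or
column sum is then at most `|X|`, and integrating over `[0, T]` and summing two blocks gives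
`2 |X| T`.
-/

open MeasureTheory
open scoped BigOperators Matrix ComplexOrder

noncomputable section

/-- Matrix exponential (exponential series in the algebra of matrices). -/
noncomputable def mexp {X : Type*} [Fintype X] [DecidableEq X] (M : Matrix X X ℂ) :
    Matrix X X ℂ :=
  NormedSpace.exp M

/-- The Keldysh covariance `C_{ρσ}(t,t')` for unitary time evolution (`B = 0`).
Here `true` encodes the branch `+` and `false` encodes the branch `−`. -/
noncomputable def keldyshCovU {X : Type*} [Fintype X] [DecidableEq X]
    (β : ℝ) (A Q : Matrix X X ℂ) : Bool → Bool → ℝ → ℝ → Matrix X X ℂ :=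
  fun ρ σ t t' =>
  let Cmp : ℝ → ℝ → Matrix X X ℂ := fun s s' =>
    mexp ((-Complex.I * (s : ℂ)) • A) * (1 + mexp ((-β : ℂ) • Q))⁻¹ *
      mexp ((Complex.I * (s' : ℂ)) • A)
  let Cpm : ℝ → ℝ → Matrix X X ℂ := fun s s' =>
    -(mexp ((-Complex.I * (s : ℂ)) • A) * (1 + mexp ((β : ℂ) • Q))⁻¹ *
      mexp ((Complex.I * (s' : ℂ)) • A))
  match ρ, σ with
  | false, true => Cmp t t'
  | true, false => Cpm t t'
  | true, true =>
      (if t' ≤ t then (1 : ℂ) else 0) • Cmp t t' + (if t < t' then (1 : ℂ) else 0) • Cpm t t'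
  | false, false =>
      (if t ≤ t' then (1 : ℂ) else 0) • Cmp t t' + (if t' < t then (1 : ℂ) else 0) • Cpm t t'

namespace Matrix

open scoped Matrix.Norms.L2Operator

variable {𝕜 m n : Type*} [RCLike 𝕜] [Fintype m] [Fintype n] [DecidableEq n]

theorem norm_apply_le_l2_opNorm (M : Matrix m n 𝕜) (i : m) (j : n) : ‖M i j‖ ≤ ‖M‖ := by
  simpa [mulVec_single] using
    (PiLp.norm_apply_le _ i).trans (M.l2_opNorm_mulVec (WithLp.toLp 2 (Pi.single j 1)))

end Matrix

section HermitianMatrix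

open scoped Matrix.Norms.L2Operator

variable {X : Type*} [Fintype X] [DecidableEq X] {A Q : Matrix X X ℂ}

theorem Matrix.IsHermitian.mexp_smul_mem_unitary (hA : A.IsHermitian) {c : ℂ}
    (hc : star c = -c) : mexp (c • A) ∈ unitary (Matrix X X ℂ) :=
  -- `NormedSpace.exp` does not depend on the choice of `ℚ`-algebra structure.
  let _ : NormedAlgebra ℚ (Matrix X X ℂ) := .restrictScalars ℚ ℂ _
  NormedSpace.exp_mem_unitary_of_mem_skewAdjoint (hA.isSelfAdjoint.smul_mem_skewAdjoint hc)

theorem Matrix.IsHermitian.cfc_exp_mul (hQ : Q.IsHermitian) (c : ℝ) :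
    cfc (fun x : ℝ => Real.exp (c * x)) Q = mexp ((c : ℂ) • Q) := by
  have hcQ : IsSelfAdjoint (c • Q) := (IsSelfAdjoint.all c).smul hQ.isSelfAdjoint
  change cfc (fun x : ℝ => Real.exp (c • x)) Q = _
  rw [cfc_comp_smul c Real.exp Q, CFC.real_exp_eq_normedSpace_exp, Complex.coe_smul, mexp]

theorem Matrix.IsHermitian.cfc_inv_one_add_exp_mul (hQ : Q.IsHermitian) (c : ℝ) :
    cfc (fun x : ℝ => (1 + Real.exp (c * x))⁻¹) Q = (1 + mexp ((c : ℂ) • Q))⁻¹ := by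
  have := hQ.isSelfAdjoint
  rw [cfc_inv (fun x => 1 + Real.exp (c * x)) Q fun x _ => by positivity,
    cfc_add Q (fun _ => 1) (fun x => Real.exp (c * x)), cfc_const_one ℝ Q, hQ.cfc_exp_mul,
    Matrix.nonsing_inv_eq_ringInverse]

theorem Matrix.IsHermitian.norm_inv_one_add_mexp_le_one (hQ : Q.IsHermitian) (c : ℝ) :
    ‖(1 + mexp ((c : ℂ) • Q))⁻¹‖ ≤ 1 := by
  rw [← hQ.cfc_inv_one_add_exp_mul]
  refine norm_cfc_le zero_le_one fun x _ => ?_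
  have hpos : 0 < 1 + Real.exp (c * x) := by positivity
  rw [Real.norm_of_nonneg (inv_pos.mpr hpos).le]
  exact inv_le_one_of_one_le₀ (by linarith [Real.exp_pos (c * x)])

theorem norm_mexp_mul_inv_one_add_mexp_mul_mexp_le_one (hA : A.IsHermitian)
    (hQ : Q.IsHermitian) (c s s' : ℝ) :
    ‖mexp ((-Complex.I * (s : ℂ)) • A) * (1 + mexp ((c : ℂ) • Q))⁻¹ *
      mexp ((Complex.I * (s' : ℂ)) • A)‖ ≤ 1 := by
  have hU := hA.mexp_smul_mem_unitary (c := -Complex.I * s) (by simp)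
  have hV := hA.mexp_smul_mem_unitary (c := Complex.I * s') (by simp)
  rw [CStarRing.norm_mul_mem_unitary _ hV, CStarRing.norm_mem_unitary_mul _ hU]
  exact hQ.norm_inv_one_add_mexp_le_one c

section

variable (β t t' : ℝ)

theorem keldyshCovU_false_true : keldyshCovU β A Q false true t t' =
    mexp ((-Complex.I * (t : ℂ)) • A) * (1 + mexp (((-β : ℝ) : ℂ) • Q))⁻¹ *
      mexp ((Complex.I * (t' : ℂ)) • A) := by
  rw [Complex.ofReal_neg]; rfl

theorem keldyshCovU_true_false : keldyshCovU β A Q true false t t' =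
    -(mexp ((-Complex.I * (t : ℂ)) • A) * (1 + mexp ((β : ℂ) • Q))⁻¹ *
      mexp ((Complex.I * (t' : ℂ)) • A)) := rfl

theorem keldyshCovU_true_true : keldyshCovU β A Q true true t t' =
    (if t' ≤ t then (1 : ℂ) else 0) • keldyshCovU β A Q false true t t' +
      (if t < t' then (1 : ℂ) else 0) • keldyshCovU β A Q true false t t' := rfl

theorem keldyshCovU_false_false : keldyshCovU β A Q false false t t' =
    (if t ≤ t' then (1 : ℂ) else 0) • keldyshCovU β A Q false true t t' +
      (if t' < t then (1 : ℂ) else 0) • keldyshCovU β A Q true false t t' := rfl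

end

theorem norm_keldyshCovU_le_one (hA : A.IsHermitian) (hQ : Q.IsHermitian) (β : ℝ) (ρ σ : Bool)
    (t t' : ℝ) : ‖keldyshCovU β A Q ρ σ t t'‖ ≤ 1 := by
  have hmp : ‖keldyshCovU β A Q false true t t'‖ ≤ 1 := by
    rw [keldyshCovU_false_true]
    exact norm_mexp_mul_inv_one_add_mexp_mul_mexp_le_one hA hQ (-β) t t'
  have hpm : ‖keldyshCovU β A Q true false t t'‖ ≤ 1 := by
    rw [keldyshCovU_true_false, norm_neg]
    exact norm_mexp_mul_inv_one_add_mexp_mul_mexp_le_one hA hQ β t t'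
  cases ρ <;> cases σ
  · rw [keldyshCovU_false_false]
    split_ifs <;> first | linarith | simpa
  · exact hmp
  · exact hpm
  · rw [keldyshCovU_true_true]
    split_ifs <;> first | linarith | simpa

theorem norm_keldyshCovU_apply_le_one (hA : A.IsHermitian) (hQ : Q.IsHermitian) (β : ℝ)
    (ρ σ : Bool) (t t' : ℝ) (x y : X) : ‖keldyshCovU β A Q ρ σ t t' x y‖ ≤ 1 :=
  (Matrix.norm_apply_le_l2_opNorm _ x y).trans (norm_keldyshCovU_le_one hA hQ β ρ σ t t')

end HermitianMatrix

theorem sum_norm_le_card_of_norm_le_one {ι E : Type*} [Fintype ι] [SeminormedAddCommGroup E]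
    {f : ι → E} (hf : ∀ i, ‖f i‖ ≤ 1) : ∑ i, ‖f i‖ ≤ Fintype.card ι := by
  simpa using Finset.sum_le_card_nsmul Finset.univ (fun i => ‖f i‖) 1 fun i _ => hf i

theorem setIntegral_Icc_le_mul_of_le {f : ℝ → ℝ} {C T : ℝ} (hT : 0 ≤ T)
    (hf₀ : ∀ t, 0 ≤ f t) (hfC : ∀ t, f t ≤ C) : ∫ t in Set.Icc 0 T, f t ≤ C * T := by
  have hnorm := norm_setIntegral_le_of_norm_le_const (μ := volume) (s := Set.Icc 0 T)
    measure_Icc_lt_top fun t _ => (Real.norm_of_nonneg (hf₀ t)).trans_le (hfC t)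
  rw [Real.volume_real_Icc_of_le hT, sub_zero] at hnorm
  exact (le_abs_self _).trans hnorm

theorem decay_constant_bounds_keldyshCovU_general
    {X : Type*} [Fintype X] [DecidableEq X]
    (β T : ℝ) (hT : 0 < T)
    (A Q : Matrix X X ℂ) (hA : A.IsHermitian) (hQ : Q.IsHermitian) :
    ((∀ ρ : Bool, ∀ t ∈ Set.Icc (0 : ℝ) T, ∀ x : X,
        (∑ σ : Bool, ∫ t' in Set.Icc (0 : ℝ) T,
            ∑ y : X, ‖(keldyshCovU β A Q ρ σ t t') x y‖)
          ≤ 2 * (Fintype.card X : ℝ) * T) ∧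
      (∀ σ : Bool, ∀ t' ∈ Set.Icc (0 : ℝ) T, ∀ y : X,
        (∑ ρ : Bool, ∫ t in Set.Icc (0 : ℝ) T,
            ∑ x : X, ‖(keldyshCovU β A Q ρ σ t t') x y‖)
          ≤ 2 * (Fintype.card X : ℝ) * T)) ∧
    ((∀ σ : Bool, ∀ t' ∈ Set.Icc (0 : ℝ) T, ∀ y : X,
        (∑ x : X, ‖(keldyshCovU β A Q true σ T t') x y‖)
          ≤ (Fintype.card X : ℝ)) ∧
      (∀ ρ : Bool, ∀ t ∈ Set.Icc (0 : ℝ) T, ∀ x : X,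
        (∑ y : X, ‖(keldyshCovU β A Q ρ false t T) x y‖)
          ≤ (Fintype.card X : ℝ))) := by
  have hrow : ∀ ρ σ t t' x, ∑ y : X, ‖keldyshCovU β A Q ρ σ t t' x y‖ ≤ Fintype.card X :=
    fun ρ σ t t' x => sum_norm_le_card_of_norm_le_one
      (norm_keldyshCovU_apply_le_one hA hQ β ρ σ t t' x)
  have hcol : ∀ ρ σ t t' y, ∑ x : X, ‖keldyshCovU β A Q ρ σ t t' x y‖ ≤ Fintype.card X :=
    fun ρ σ t t' y => sum_norm_le_card_of_norm_le_one
      (norm_keldyshCovU_apply_le_one hA hQ β ρ σ t t' · y)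
  have hsum_integral (g : Bool → ℝ → ℝ) (hg₀ : ∀ b s, 0 ≤ g b s) (hgC : ∀ b s, g b s ≤ Fintype.card X) :
      ∑ b, ∫ s in Set.Icc 0 T, g b s ≤ 2 * Fintype.card X * T :=
    calc ∑ b, ∫ s in Set.Icc 0 T, g b s ≤ ∑ _b : Bool, (Fintype.card X : ℝ) * T :=
          Finset.sum_le_sum fun b _ => setIntegral_Icc_le_mul_of_le hT.le (hg₀ b) (hgC b)
      _ = 2 * Fintype.card X * T := by simp [mul_assoc]
  exact ⟨⟨fun ρ _ _ x => hsum_integral _ (fun _ _ => by positivity) (fun σ t' => hrow ρ σ _ t' x),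
    fun σ _ _ y => hsum_integral _ (fun _ _ => by positivity) (fun ρ t => hcol ρ σ t _ y)⟩,
    fun σ t' _ y => hcol _ _ _ _ y, fun ρ t _ x => hrow _ _ _ _ x⟩

/-- Bounds on the decay constant `α_C ≤ 2|X|T` and the modified decay constant `α̃_C ≤ |X|`
for the Keldysh covariance of a unitary time evolution (`B = 0`). The bound on each
supremum is expressed pointwise; `true` encodes the branch `+`, `false` encodes `−`. -/
theorem decay_constant_bounds_keldyshCovU
    {X : Type*} [Fintype X] [DecidableEq X] [Nonempty X]
    (β T : ℝ) (hβ : 0 < β) (hT : 0 < T)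
    (A Q : Matrix X X ℂ) (hA : A.IsHermitian) (hQ : Q.IsHermitian) :
    ((∀ ρ : Bool, ∀ t ∈ Set.Icc (0 : ℝ) T, ∀ x : X,
        (∑ σ : Bool, ∫ t' in Set.Icc (0 : ℝ) T,
            ∑ y : X, ‖(keldyshCovU β A Q ρ σ t t') x y‖)
          ≤ 2 * (Fintype.card X : ℝ) * T) ∧
      (∀ σ : Bool, ∀ t' ∈ Set.Icc (0 : ℝ) T, ∀ y : X,
        (∑ ρ : Bool, ∫ t in Set.Icc (0 : ℝ) T,
            ∑ x : X, ‖(keldyshCovU β A Q ρ σ t t') x y‖)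
          ≤ 2 * (Fintype.card X : ℝ) * T)) ∧
    ((∀ σ : Bool, ∀ t' ∈ Set.Icc (0 : ℝ) T, ∀ y : X,
        (∑ x : X, ‖(keldyshCovU β A Q true σ T t') x y‖)
          ≤ (Fintype.card X : ℝ)) ∧
      (∀ ρ : Bool, ∀ t ∈ Set.Icc (0 : ℝ) T, ∀ x : X,
        (∑ y : X, ‖(keldyshCovU β A Q ρ false t T) x y‖)
          ≤ (Fintype.card X : ℝ))) :=
  decay_constant_bounds_keldyshCovU_general β T hT A Q hA hQ
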